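/- arXiv:2001.10826 — 5 statements merged into one kernel-verified Lean document; each statement's English description precedes it below -/
import Mathlib

section
/- Let d(n) = Σ_{r even, 0≤r≤n} C(n,r)·C(r,r/2) − Σ_{r odd, 0≤r≤n} C(n,r)·C(r,(r−1)/2). Then for all n ≥ 1, (n+2)·d(n+1) = n·(2·d(n) + 3·d(n−1)). -/
open Finset Nat

/-- `d n = Σ_{r even, 0≤r≤n} C(n,r)·C(r,r/2) − Σ_{r odd, 0≤r≤n} C(n,r)·C(r,(r−1)/2)`. -/
def dSU2 (n : ℕ) : ℤ :=
  (∑ r ∈ Finset.range (n + 1), if Even r then (n.choose r * r.choose (r / 2) : ℤ) else 0)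
  - ∑ r ∈ Finset.range (n + 1), if Odd r then (n.choose r * r.choose ((r - 1) / 2) : ℤ) else 0

/-- summand of `d` over ℚ. -/
def Tq (n m : ℕ) : ℚ :=
  (n.choose (2*m) : ℚ) * ((2*m).choose m : ℚ)
    - (n.choose (2*m+1) : ℚ) * ((2*m+1).choose m : ℚ)

/-- WZ certificate. -/
def gq (n : ℕ) : ℕ → ℚ
  | 0 => 0
  | (m+1) => 2*(2*(n:ℚ)-6*m-5)*((n:ℚ)-2*m)*
      ((n.choose (2*m) : ℚ) * ((2*m).choose m : ℚ)
        - (n.choose (2*m) : ℚ) * ((2*m).choose (m+1) : ℚ))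

lemma gq_zero (n : ℕ) : gq n 0 = 0 := rfl

lemma gq_succ (n m : ℕ) : gq n (m+1) = 2*(2*(n:ℚ)-6*m-5)*((n:ℚ)-2*m)*
      ((n.choose (2*m) : ℚ) * ((2*m).choose m : ℚ)
        - (n.choose (2*m) : ℚ) * ((2*m).choose (m+1) : ℚ)) := rfl

lemma gq_one (n : ℕ) : gq n 1 = 2*(2*(n:ℚ)-5)*(n:ℚ) := by
  have : (1:ℕ) = 0 + 1 := rfl
  rw [this, gq_succ]
  simp

lemma cast_choose' (a b c : ℕ) (h : a = b + c) :
    ((a.choose b : ℕ) : ℚ) = (a)! / ((b)! * (c)!) := by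
  subst h
  rw [Nat.cast_choose ℚ (Nat.le_add_right _ _)]
  rw [Nat.add_sub_cancel_left]

lemma cast_cc (a b c d e : ℕ) (h1 : a = b + c) (h2 : b = d + e) :
    ((a.choose b : ℕ) : ℚ) * ((b.choose d : ℕ) : ℚ)
      = (a)! / ((c)! * ((d)! * (e)!)) := by
  rw [cast_choose' a b c h1, cast_choose' b d e h2]
  have hb : ((b)! : ℚ) ≠ 0 := by positivity
  field_simp

lemma cc_lin (a b c d e : ℕ) (h1 : a = b + c) (h2 : b = d + e) (co z : ℚ)
    (hz : co * (((c)! : ℚ) * (((d)! : ℚ) * ((e)! : ℚ))) * z = 1) :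
    ((a.choose b : ℕ) : ℚ) * ((b.choose d : ℕ) : ℚ) = ((a)! : ℚ) * co * z := by
  have hX : (((c)! : ℚ) * (((d)! : ℚ) * ((e)! : ℚ))) ≠ 0 := by positivity
  rw [cast_cc a b c d e h1 h2, div_eq_iff hX]
  linear_combination (-((a)! : ℚ)) * hz

lemma mk1 (Y co X : ℚ) (h : co * X = Y) (hY : Y ≠ 0) : co * X * Y⁻¹ = 1 := by
  rw [h, mul_inv_cancel₀ hY]

set_option maxHeartbeats 1000000

/-- case m = 0 -/
lemma key_m0 (k : ℕ) :
    ((k:ℚ)+3) * Tq (k+2) 0 - 2*((k:ℚ)+1)*Tq (k+1) 0 - 3*((k:ℚ)+1)*Tq k 0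
      = gq (k+1) (0+1) - gq (k+1) 0 := by
  simp only [Tq, gq_succ, gq_zero, show (2*0:ℕ) = 0 from rfl, show (2*0+1:ℕ) = 1 from rfl,
    Nat.choose_zero_right, Nat.choose_one_right, Nat.choose_self,
    show (0:ℕ).choose (0+1) = 0 from rfl]
  push_cast
  ring

/-- interior case m = t+2, k = 2t+5+j -/
lemma key_int (t j : ℕ) :
    (((2*t+5+j:ℕ):ℚ)+3) * Tq (2*t+5+j+2) (t+1+1)
      - 2*(((2*t+5+j:ℕ):ℚ)+1)*Tq (2*t+5+j+1) (t+1+1)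
      - 3*(((2*t+5+j:ℕ):ℚ)+1)*Tq (2*t+5+j) (t+1+1)
      = gq (2*t+5+j+1) (t+1+1+1) - gq (2*t+5+j+1) (t+1+1) := by
  have hY : ((((j+1+1+1+1)! : ℕ) : ℚ) * (((t+1+1+1)! : ℕ) * ((t+1+1+1)! : ℕ))) ≠ 0 := by
    positivity
  simp only [Tq, gq_succ]
  rw [cc_lin (2*t+5+j+2) (2*(t+1+1)) (j+1+1+1) (t+1+1) (t+1+1) (by ring) (by ring)
        (((j:ℚ)+4)*(((t:ℚ)+3)*((t:ℚ)+3)))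
        ((((j+1+1+1+1)! : ℕ) : ℚ) * (((t+1+1+1)! : ℕ) * ((t+1+1+1)! : ℕ)))⁻¹
        (mk1 _ _ _ (by simp only [Nat.factorial_succ]; push_cast; ring) hY),
      cc_lin (2*t+5+j+2) (2*(t+1+1)+1) (j+1+1) (t+1+1) (t+1+1+1) (by ring) (by ring)
        (((j:ℚ)+4)*((j:ℚ)+3)*((t:ℚ)+3))
        ((((j+1+1+1+1)! : ℕ) : ℚ) * (((t+1+1+1)! : ℕ) * ((t+1+1+1)! : ℕ)))⁻¹
        (mk1 _ _ _ (by simp only [Nat.factorial_succ]; push_cast; ring) hY),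
      cc_lin (2*t+5+j+1) (2*(t+1+1)) (j+1+1) (t+1+1) (t+1+1) (by ring) (by ring)
        (((j:ℚ)+4)*((j:ℚ)+3)*(((t:ℚ)+3)*((t:ℚ)+3)))
        ((((j+1+1+1+1)! : ℕ) : ℚ) * (((t+1+1+1)! : ℕ) * ((t+1+1+1)! : ℕ)))⁻¹
        (mk1 _ _ _ (by simp only [Nat.factorial_succ]; push_cast; ring) hY),
      cc_lin (2*t+5+j+1) (2*(t+1+1)+1) (j+1) (t+1+1) (t+1+1+1) (by ring) (by ring)
        (((j:ℚ)+4)*((j:ℚ)+3)*((j:ℚ)+2)*((t:ℚ)+3))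
        ((((j+1+1+1+1)! : ℕ) : ℚ) * (((t+1+1+1)! : ℕ) * ((t+1+1+1)! : ℕ)))⁻¹
        (mk1 _ _ _ (by simp only [Nat.factorial_succ]; push_cast; ring) hY),
      cc_lin (2*t+5+j) (2*(t+1+1)) (j+1) (t+1+1) (t+1+1) (by ring) (by ring)
        (((j:ℚ)+4)*((j:ℚ)+3)*((j:ℚ)+2)*(((t:ℚ)+3)*((t:ℚ)+3)))
        ((((j+1+1+1+1)! : ℕ) : ℚ) * (((t+1+1+1)! : ℕ) * ((t+1+1+1)! : ℕ)))⁻¹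
        (mk1 _ _ _ (by simp only [Nat.factorial_succ]; push_cast; ring) hY),
      cc_lin (2*t+5+j) (2*(t+1+1)+1) (j) (t+1+1) (t+1+1+1) (by ring) (by ring)
        (((j:ℚ)+4)*((j:ℚ)+3)*((j:ℚ)+2)*((j:ℚ)+1)*((t:ℚ)+3))
        ((((j+1+1+1+1)! : ℕ) : ℚ) * (((t+1+1+1)! : ℕ) * ((t+1+1+1)! : ℕ)))⁻¹
        (mk1 _ _ _ (by simp only [Nat.factorial_succ]; push_cast; ring) hY),
      cc_lin (2*t+5+j+1) (2*(t+1+1)) (j+1+1) (t+1+1+1) (t+1) (by ring) (by ring)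
        (((j:ℚ)+4)*((j:ℚ)+3)*(((t:ℚ)+3)*((t:ℚ)+2)))
        ((((j+1+1+1+1)! : ℕ) : ℚ) * (((t+1+1+1)! : ℕ) * ((t+1+1+1)! : ℕ)))⁻¹
        (mk1 _ _ _ (by simp only [Nat.factorial_succ]; push_cast; ring) hY),
      cc_lin (2*t+5+j+1) (2*(t+1)) (j+1+1+1+1) (t+1) (t+1) (by ring) (by ring)
        ((((t:ℚ)+3)*((t:ℚ)+2)*(((t:ℚ)+3)*((t:ℚ)+2))))
        ((((j+1+1+1+1)! : ℕ) : ℚ) * (((t+1+1+1)! : ℕ) * ((t+1+1+1)! : ℕ)))⁻¹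
        (mk1 _ _ _ (by simp only [Nat.factorial_succ]; push_cast; ring) hY),
      cc_lin (2*t+5+j+1) (2*(t+1)) (j+1+1+1+1) (t+1+1) (t) (by ring) (by ring)
        (((t:ℚ)+3)*(((t:ℚ)+3)*((t:ℚ)+2)*((t:ℚ)+1)))
        ((((j+1+1+1+1)! : ℕ) : ℚ) * (((t+1+1+1)! : ℕ) * ((t+1+1+1)! : ℕ)))⁻¹
        (mk1 _ _ _ (by simp only [Nat.factorial_succ]; push_cast; ring) hY)]
  rw [show 2*t+5+j+2 = 2*t+5+j+1+1 from by ring]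
  simp only [Nat.factorial_succ]
  push_cast
  ring

/-- boundary m = t+2, k = 2t+4 -/
lemma key_b4 (t : ℕ) :
    (((2*t+4:ℕ):ℚ)+3) * Tq (2*t+4+2) (t+1+1)
      - 2*(((2*t+4:ℕ):ℚ)+1)*Tq (2*t+4+1) (t+1+1)
      - 3*(((2*t+4:ℕ):ℚ)+1)*Tq (2*t+4) (t+1+1)
      = gq (2*t+4+1) (t+1+1+1) - gq (2*t+4+1) (t+1+1) := by
  have hY : ((((0+1+1+1)! : ℕ) : ℚ) * (((t+1+1+1)! : ℕ) * ((t+1+1+1)! : ℕ))) ≠ 0 := by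
    positivity
  simp only [Tq, gq_succ]
  rw [show ((2*t+4).choose (2*(t+1+1)+1) : ℕ) = 0 from Nat.choose_eq_zero_of_lt (by omega)]
  rw [cc_lin (2*t+4+2) (2*(t+1+1)) (0+1+1) (t+1+1) (t+1+1) (by ring) (by ring)
        (3*(((t:ℚ)+3)*((t:ℚ)+3)))
        ((((0+1+1+1)! : ℕ) : ℚ) * (((t+1+1+1)! : ℕ) * ((t+1+1+1)! : ℕ)))⁻¹
        (mk1 _ _ _ (by simp only [Nat.factorial_succ, Nat.factorial_zero]; push_cast; ring) hY),
      cc_lin (2*t+4+2) (2*(t+1+1)+1) (0+1) (t+1+1) (t+1+1+1) (by ring) (by ring)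
        (6*((t:ℚ)+3))
        ((((0+1+1+1)! : ℕ) : ℚ) * (((t+1+1+1)! : ℕ) * ((t+1+1+1)! : ℕ)))⁻¹
        (mk1 _ _ _ (by simp only [Nat.factorial_succ, Nat.factorial_zero]; push_cast; ring) hY),
      cc_lin (2*t+4+1) (2*(t+1+1)) (0+1) (t+1+1) (t+1+1) (by ring) (by ring)
        (6*(((t:ℚ)+3)*((t:ℚ)+3)))
        ((((0+1+1+1)! : ℕ) : ℚ) * (((t+1+1+1)! : ℕ) * ((t+1+1+1)! : ℕ)))⁻¹
        (mk1 _ _ _ (by simp only [Nat.factorial_succ, Nat.factorial_zero]; push_cast; ring) hY),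
      cc_lin (2*t+4+1) (2*(t+1+1)+1) (0) (t+1+1) (t+1+1+1) (by ring) (by ring)
        (6*((t:ℚ)+3))
        ((((0+1+1+1)! : ℕ) : ℚ) * (((t+1+1+1)! : ℕ) * ((t+1+1+1)! : ℕ)))⁻¹
        (mk1 _ _ _ (by simp only [Nat.factorial_succ, Nat.factorial_zero]; push_cast; ring) hY),
      cc_lin (2*t+4) (2*(t+1+1)) (0) (t+1+1) (t+1+1) (by ring) (by ring)
        (6*(((t:ℚ)+3)*((t:ℚ)+3)))
        ((((0+1+1+1)! : ℕ) : ℚ) * (((t+1+1+1)! : ℕ) * ((t+1+1+1)! : ℕ)))⁻¹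
        (mk1 _ _ _ (by simp only [Nat.factorial_succ, Nat.factorial_zero]; push_cast; ring) hY),
      cc_lin (2*t+4+1) (2*(t+1+1)) (0+1) (t+1+1+1) (t+1) (by ring) (by ring)
        (6*(((t:ℚ)+3)*((t:ℚ)+2)))
        ((((0+1+1+1)! : ℕ) : ℚ) * (((t+1+1+1)! : ℕ) * ((t+1+1+1)! : ℕ)))⁻¹
        (mk1 _ _ _ (by simp only [Nat.factorial_succ, Nat.factorial_zero]; push_cast; ring) hY),
      cc_lin (2*t+4+1) (2*(t+1)) (0+1+1+1) (t+1) (t+1) (by ring) (by ring)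
        ((((t:ℚ)+3)*((t:ℚ)+2)*(((t:ℚ)+3)*((t:ℚ)+2))))
        ((((0+1+1+1)! : ℕ) : ℚ) * (((t+1+1+1)! : ℕ) * ((t+1+1+1)! : ℕ)))⁻¹
        (mk1 _ _ _ (by simp only [Nat.factorial_succ, Nat.factorial_zero]; push_cast; ring) hY),
      cc_lin (2*t+4+1) (2*(t+1)) (0+1+1+1) (t+1+1) (t) (by ring) (by ring)
        (((t:ℚ)+3)*(((t:ℚ)+3)*((t:ℚ)+2)*((t:ℚ)+1)))
        ((((0+1+1+1)! : ℕ) : ℚ) * (((t+1+1+1)! : ℕ) * ((t+1+1+1)! : ℕ)))⁻¹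
        (mk1 _ _ _ (by simp only [Nat.factorial_succ, Nat.factorial_zero]; push_cast; ring) hY)]
  rw [show 2*t+4+2 = 2*t+4+1+1 from by ring]
  simp only [Nat.factorial_succ]
  push_cast
  ring

/-- boundary m = t+2, k = 2t+3 -/
lemma key_b3 (t : ℕ) :
    (((2*t+3:ℕ):ℚ)+3) * Tq (2*t+3+2) (t+1+1)
      - 2*(((2*t+3:ℕ):ℚ)+1)*Tq (2*t+3+1) (t+1+1)
      - 3*(((2*t+3:ℕ):ℚ)+1)*Tq (2*t+3) (t+1+1)
      = gq (2*t+3+1) (t+1+1+1) - gq (2*t+3+1) (t+1+1) := by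
  have hY : ((((0+1+1)! : ℕ) : ℚ) * (((t+1+1+1)! : ℕ) * ((t+1+1+1)! : ℕ))) ≠ 0 := by
    positivity
  simp only [Tq, gq_succ]
  rw [show ((2*t+3).choose (2*(t+1+1)) : ℕ) = 0 from Nat.choose_eq_zero_of_lt (by omega),
      show ((2*t+3).choose (2*(t+1+1)+1) : ℕ) = 0 from Nat.choose_eq_zero_of_lt (by omega),
      show ((2*t+3+1).choose (2*(t+1+1)+1) : ℕ) = 0 from Nat.choose_eq_zero_of_lt (by omega)]
  rw [cc_lin (2*t+3+2) (2*(t+1+1)) (0+1) (t+1+1) (t+1+1) (by ring) (by ring)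
        (2*(((t:ℚ)+3)*((t:ℚ)+3)))
        ((((0+1+1)! : ℕ) : ℚ) * (((t+1+1+1)! : ℕ) * ((t+1+1+1)! : ℕ)))⁻¹
        (mk1 _ _ _ (by simp only [Nat.factorial_succ, Nat.factorial_zero]; push_cast; ring) hY),
      cc_lin (2*t+3+2) (2*(t+1+1)+1) (0) (t+1+1) (t+1+1+1) (by ring) (by ring)
        (2*((t:ℚ)+3))
        ((((0+1+1)! : ℕ) : ℚ) * (((t+1+1+1)! : ℕ) * ((t+1+1+1)! : ℕ)))⁻¹
        (mk1 _ _ _ (by simp only [Nat.factorial_succ, Nat.factorial_zero]; push_cast; ring) hY),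
      cc_lin (2*t+3+1) (2*(t+1+1)) (0) (t+1+1) (t+1+1) (by ring) (by ring)
        (2*(((t:ℚ)+3)*((t:ℚ)+3)))
        ((((0+1+1)! : ℕ) : ℚ) * (((t+1+1+1)! : ℕ) * ((t+1+1+1)! : ℕ)))⁻¹
        (mk1 _ _ _ (by simp only [Nat.factorial_succ, Nat.factorial_zero]; push_cast; ring) hY),
      cc_lin (2*t+3+1) (2*(t+1+1)) (0) (t+1+1+1) (t+1) (by ring) (by ring)
        (2*(((t:ℚ)+3)*((t:ℚ)+2)))
        ((((0+1+1)! : ℕ) : ℚ) * (((t+1+1+1)! : ℕ) * ((t+1+1+1)! : ℕ)))⁻¹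
        (mk1 _ _ _ (by simp only [Nat.factorial_succ, Nat.factorial_zero]; push_cast; ring) hY),
      cc_lin (2*t+3+1) (2*(t+1)) (0+1+1) (t+1) (t+1) (by ring) (by ring)
        ((((t:ℚ)+3)*((t:ℚ)+2)*(((t:ℚ)+3)*((t:ℚ)+2))))
        ((((0+1+1)! : ℕ) : ℚ) * (((t+1+1+1)! : ℕ) * ((t+1+1+1)! : ℕ)))⁻¹
        (mk1 _ _ _ (by simp only [Nat.factorial_succ, Nat.factorial_zero]; push_cast; ring) hY),
      cc_lin (2*t+3+1) (2*(t+1)) (0+1+1) (t+1+1) (t) (by ring) (by ring)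
        (((t:ℚ)+3)*(((t:ℚ)+3)*((t:ℚ)+2)*((t:ℚ)+1)))
        ((((0+1+1)! : ℕ) : ℚ) * (((t+1+1+1)! : ℕ) * ((t+1+1+1)! : ℕ)))⁻¹
        (mk1 _ _ _ (by simp only [Nat.factorial_succ, Nat.factorial_zero]; push_cast; ring) hY)]
  rw [show 2*t+3+2 = 2*t+3+1+1 from by ring]
  simp only [Nat.factorial_succ]
  push_cast
  ring

/-- boundary m = t+2, k = 2t+2 -/
lemma key_b2 (t : ℕ) :
    (((2*t+2:ℕ):ℚ)+3) * Tq (2*t+2+2) (t+1+1)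
      - 2*(((2*t+2:ℕ):ℚ)+1)*Tq (2*t+2+1) (t+1+1)
      - 3*(((2*t+2:ℕ):ℚ)+1)*Tq (2*t+2) (t+1+1)
      = gq (2*t+2+1) (t+1+1+1) - gq (2*t+2+1) (t+1+1) := by
  have hY : ((((0+1)! : ℕ) : ℚ) * (((t+1+1)! : ℕ) * ((t+1+1)! : ℕ))) ≠ 0 := by
    positivity
  simp only [Tq, gq_succ]
  rw [show ((2*t+2+2).choose (2*(t+1+1)+1) : ℕ) = 0 from Nat.choose_eq_zero_of_lt (by omega),
      show ((2*t+2+1).choose (2*(t+1+1)) : ℕ) = 0 from Nat.choose_eq_zero_of_lt (by omega),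
      show ((2*t+2+1).choose (2*(t+1+1)+1) : ℕ) = 0 from Nat.choose_eq_zero_of_lt (by omega),
      show ((2*t+2).choose (2*(t+1+1)) : ℕ) = 0 from Nat.choose_eq_zero_of_lt (by omega),
      show ((2*t+2).choose (2*(t+1+1)+1) : ℕ) = 0 from Nat.choose_eq_zero_of_lt (by omega)]
  rw [cc_lin (2*t+2+2) (2*(t+1+1)) (0) (t+1+1) (t+1+1) (by ring) (by ring)
        (1)
        ((((0+1)! : ℕ) : ℚ) * (((t+1+1)! : ℕ) * ((t+1+1)! : ℕ)))⁻¹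
        (mk1 _ _ _ (by simp only [Nat.factorial_succ, Nat.factorial_zero]; push_cast; ring) hY),
      cc_lin (2*t+2+1) (2*(t+1)) (0+1) (t+1) (t+1) (by ring) (by ring)
        (((t:ℚ)+2)*((t:ℚ)+2))
        ((((0+1)! : ℕ) : ℚ) * (((t+1+1)! : ℕ) * ((t+1+1)! : ℕ)))⁻¹
        (mk1 _ _ _ (by simp only [Nat.factorial_succ, Nat.factorial_zero]; push_cast; ring) hY),
      cc_lin (2*t+2+1) (2*(t+1)) (0+1) (t+1+1) (t) (by ring) (by ring)
        (((t:ℚ)+2)*((t:ℚ)+1))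
        ((((0+1)! : ℕ) : ℚ) * (((t+1+1)! : ℕ) * ((t+1+1)! : ℕ)))⁻¹
        (mk1 _ _ _ (by simp only [Nat.factorial_succ, Nat.factorial_zero]; push_cast; ring) hY)]
  rw [show 2*t+2+2 = 2*t+2+1+1 from by ring]
  simp only [Nat.factorial_succ]
  push_cast
  ring

/-- boundary m = t+2, k = 2t+1 -/
lemma key_b1 (t : ℕ) :
    (((2*t+1:ℕ):ℚ)+3) * Tq (2*t+1+2) (t+1+1)
      - 2*(((2*t+1:ℕ):ℚ)+1)*Tq (2*t+1+1) (t+1+1)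
      - 3*(((2*t+1:ℕ):ℚ)+1)*Tq (2*t+1) (t+1+1)
      = gq (2*t+1+1) (t+1+1+1) - gq (2*t+1+1) (t+1+1) := by
  simp only [Tq, gq_succ]
  rw [show ((2*t+1+2).choose (2*(t+1+1)) : ℕ) = 0 from Nat.choose_eq_zero_of_lt (by omega),
      show ((2*t+1+2).choose (2*(t+1+1)+1) : ℕ) = 0 from Nat.choose_eq_zero_of_lt (by omega),
      show ((2*t+1+1).choose (2*(t+1+1)) : ℕ) = 0 from Nat.choose_eq_zero_of_lt (by omega),
      show ((2*t+1+1).choose (2*(t+1+1)+1) : ℕ) = 0 from Nat.choose_eq_zero_of_lt (by omega),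
      show ((2*t+1).choose (2*(t+1+1)) : ℕ) = 0 from Nat.choose_eq_zero_of_lt (by omega),
      show ((2*t+1).choose (2*(t+1+1)+1) : ℕ) = 0 from Nat.choose_eq_zero_of_lt (by omega)]
  push_cast
  ring

/-- region m = t+2, k ≤ 2t -/
lemma key_b0 (t k : ℕ) (hk : k ≤ 2*t) :
    ((k:ℚ)+3) * Tq (k+2) (t+1+1)
      - 2*((k:ℚ)+1)*Tq (k+1) (t+1+1)
      - 3*((k:ℚ)+1)*Tq k (t+1+1)
      = gq (k+1) (t+1+1+1) - gq (k+1) (t+1+1) := by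
  simp only [Tq, gq_succ]
  rw [show ((k+2).choose (2*(t+1+1)) : ℕ) = 0 from Nat.choose_eq_zero_of_lt (by omega),
      show ((k+2).choose (2*(t+1+1)+1) : ℕ) = 0 from Nat.choose_eq_zero_of_lt (by omega),
      show ((k+1).choose (2*(t+1+1)) : ℕ) = 0 from Nat.choose_eq_zero_of_lt (by omega),
      show ((k+1).choose (2*(t+1+1)+1) : ℕ) = 0 from Nat.choose_eq_zero_of_lt (by omega),
      show ((k).choose (2*(t+1+1)) : ℕ) = 0 from Nat.choose_eq_zero_of_lt (by omega),
      show ((k).choose (2*(t+1+1)+1) : ℕ) = 0 from Nat.choose_eq_zero_of_lt (by omega),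
      show ((k+1).choose (2*(t+1)) : ℕ) = 0 from Nat.choose_eq_zero_of_lt (by omega)]
  push_cast
  ring

/-- m = 1, interior k = 3+j -/
lemma key_m1_int (j : ℕ) :
    (((3+j:ℕ):ℚ)+3) * Tq (3+j+2) 1
      - 2*(((3+j:ℕ):ℚ)+1)*Tq (3+j+1) 1
      - 3*(((3+j:ℕ):ℚ)+1)*Tq (3+j) 1
      = gq (3+j+1) (1+1) - gq (3+j+1) 1 := by
  have hY : (((j+1+1+1+1)! : ℕ) : ℚ) ≠ 0 := by positivity
  simp only [Tq, gq_succ, show ((2*0:ℕ).choose (0+1)) = 0 from rfl]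
  rw [cc_lin (3+j+2) (2*1) (j+1+1+1) 1 1 (by ring) (by ring)
        (((j:ℚ)+4)) ((((j+1+1+1+1)! : ℕ) : ℚ))⁻¹
        (mk1 _ _ _ (by simp only [Nat.factorial_succ, Nat.factorial_zero, Nat.factorial_one]; push_cast; ring) hY),
      cc_lin (3+j+2) (2*1+1) (j+1+1) 1 (0+1+1) (by ring) (by ring)
        (((j:ℚ)+4)*((j:ℚ)+3)/2) ((((j+1+1+1+1)! : ℕ) : ℚ))⁻¹
        (mk1 _ _ _ (by simp only [Nat.factorial_succ, Nat.factorial_zero, Nat.factorial_one]; push_cast; ring) hY),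
      cc_lin (3+j+1) (2*1) (j+1+1) 1 1 (by ring) (by ring)
        (((j:ℚ)+4)*((j:ℚ)+3)) ((((j+1+1+1+1)! : ℕ) : ℚ))⁻¹
        (mk1 _ _ _ (by simp only [Nat.factorial_succ, Nat.factorial_zero, Nat.factorial_one]; push_cast; ring) hY),
      cc_lin (3+j+1) (2*1+1) (j+1) 1 (0+1+1) (by ring) (by ring)
        (((j:ℚ)+4)*((j:ℚ)+3)*((j:ℚ)+2)/2) ((((j+1+1+1+1)! : ℕ) : ℚ))⁻¹
        (mk1 _ _ _ (by simp only [Nat.factorial_succ, Nat.factorial_zero, Nat.factorial_one]; push_cast; ring) hY),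
      cc_lin (3+j) (2*1) (j+1) 1 1 (by ring) (by ring)
        (((j:ℚ)+4)*((j:ℚ)+3)*((j:ℚ)+2)) ((((j+1+1+1+1)! : ℕ) : ℚ))⁻¹
        (mk1 _ _ _ (by simp only [Nat.factorial_succ, Nat.factorial_zero, Nat.factorial_one]; push_cast; ring) hY),
      cc_lin (3+j) (2*1+1) (j) 1 (0+1+1) (by ring) (by ring)
        (((j:ℚ)+4)*((j:ℚ)+3)*((j:ℚ)+2)*((j:ℚ)+1)/2) ((((j+1+1+1+1)! : ℕ) : ℚ))⁻¹
        (mk1 _ _ _ (by simp only [Nat.factorial_succ, Nat.factorial_zero, Nat.factorial_one]; push_cast; ring) hY),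
      cc_lin (3+j+1) (2*1) (j+1+1) (1+1) 0 (by ring) (by ring)
        (((j:ℚ)+4)*((j:ℚ)+3)/2) ((((j+1+1+1+1)! : ℕ) : ℚ))⁻¹
        (mk1 _ _ _ (by simp only [Nat.factorial_succ, Nat.factorial_zero, Nat.factorial_one]; push_cast; ring) hY),
      cc_lin (3+j+1) (2*0) (j+1+1+1+1) 0 0 (by ring) (by ring)
        (1) ((((j+1+1+1+1)! : ℕ) : ℚ))⁻¹
        (mk1 _ _ _ (by simp only [Nat.factorial_succ, Nat.factorial_zero, Nat.factorial_one]; push_cast; ring) hY)]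
  rw [show 3+j+2 = j+1+1+1+1+1 from by ring,
      show 3+j+1 = j+1+1+1+1 from by ring,
      show 3+j = j+1+1+1 from by ring]
  simp only [Nat.factorial_succ]
  push_cast
  ring

/-- m = 1, k ≤ 2 -/
lemma key_m1_small (k : ℕ) (hk : k ≤ 2) :
    ((k:ℚ)+3) * Tq (k+2) 1
      - 2*((k:ℚ)+1)*Tq (k+1) 1
      - 3*((k:ℚ)+1)*Tq k 1
      = gq (k+1) (1+1) - gq (k+1) 1 := by
  interval_cases k <;>
    norm_num [Tq, gq_succ, gq_one, Nat.choose]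

lemma key (k m : ℕ) :
    ((k:ℚ)+3) * Tq (k+2) m - 2*((k:ℚ)+1)*Tq (k+1) m - 3*((k:ℚ)+1)*Tq k m
      = gq (k+1) (m+1) - gq (k+1) m := by
  rcases Nat.lt_or_ge m 2 with hm | hm
  · interval_cases m
    · exact key_m0 k
    · rcases Nat.lt_or_ge k 3 with hk | hk
      · exact key_m1_small k (by omega)
      · obtain ⟨j, rfl⟩ : ∃ j, k = 3+j := ⟨k-3, by omega⟩
        exact key_m1_int j
  · obtain ⟨t, rfl⟩ : ∃ t, m = t+1+1 := ⟨m-2, by omega⟩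
    rcases Nat.lt_or_ge k (2*t+1) with hk | hk
    · exact key_b0 t k (by omega)
    · rcases Nat.lt_or_ge k (2*t+5) with hk2 | hk2
      · obtain h|h|h|h : k = 2*t+1 ∨ k = 2*t+2 ∨ k = 2*t+3 ∨ k = 2*t+4 := by omega
        · subst h; exact key_b1 t
        · subst h; exact key_b2 t
        · subst h; exact key_b3 t
        · subst h; exact key_b4 t
      · obtain ⟨j, rfl⟩ : ∃ j, k = 2*t+5+j := ⟨k-(2*t+5), by omega⟩
        exact key_int t j

lemma gq_big (k : ℕ) : gq (k+1) (k+3) = 0 := by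
  rw [show (k+3) = (k+2)+1 from rfl, gq_succ,
    show ((k+1).choose (2*(k+2)) : ℕ) = 0 from Nat.choose_eq_zero_of_lt (by omega)]
  push_cast
  ring

lemma tele (k : ℕ) :
    ∑ m ∈ range (k+3),
      (((k:ℚ)+3) * Tq (k+2) m - 2*((k:ℚ)+1)*Tq (k+1) m - 3*((k:ℚ)+1)*Tq k m) = 0 := by
  rw [Finset.sum_congr rfl (fun m _ => key k m), Finset.sum_range_sub (gq (k+1)),
    gq_big, gq_zero, sub_zero]

lemma even_part (n K : ℕ) (h : n + 1 ≤ 2*K) :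
    (∑ r ∈ range (n+1), if Even r then ((n.choose r : ℚ) * (r.choose (r/2) : ℚ)) else 0)
      = ∑ m ∈ range K, ((n.choose (2*m) : ℚ) * ((2*m).choose m : ℚ)) := by
  rw [← Finset.sum_filter]
  have himg : ∑ r ∈ (range K).image (fun m => 2*m),
        ((n.choose r : ℚ) * (r.choose (r/2) : ℚ))
      = ∑ m ∈ range K, ((n.choose (2*m) : ℚ) * ((2*m).choose m : ℚ)) := by
    rw [Finset.sum_image (by
      intro a _ b _ hab
      have : 2*a = 2*b := hab
      omega)]
    exact Finset.sum_congr rfl fun m _ => by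
      rw [Nat.mul_div_cancel_left m (by norm_num : 0 < 2)]
  rw [← himg]
  apply Finset.sum_subset
  · intro r hr
    simp only [Finset.mem_filter, Finset.mem_range] at hr
    obtain ⟨m, hm⟩ := hr.2
    simp only [Finset.mem_image, Finset.mem_range]
    exact ⟨m, by omega, by omega⟩
  · intro r hr hnr
    simp only [Finset.mem_image, Finset.mem_range] at hr
    simp only [Finset.mem_filter, Finset.mem_range] at hnr
    obtain ⟨m, _, rfl⟩ := hr
    have hlt : n < 2*m := by
      by_contra hc
      exact hnr ⟨by omega, even_two_mul m⟩
    rw [Nat.choose_eq_zero_of_lt hlt]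
    simp

lemma odd_part (n K : ℕ) (h : n + 1 ≤ 2*K) :
    (∑ r ∈ range (n+1), if Odd r then ((n.choose r : ℚ) * (r.choose ((r-1)/2) : ℚ)) else 0)
      = ∑ m ∈ range K, ((n.choose (2*m+1) : ℚ) * ((2*m+1).choose m : ℚ)) := by
  rw [← Finset.sum_filter]
  have himg : ∑ r ∈ (range K).image (fun m => 2*m+1),
        ((n.choose r : ℚ) * (r.choose ((r-1)/2) : ℚ))
      = ∑ m ∈ range K, ((n.choose (2*m+1) : ℚ) * ((2*m+1).choose m : ℚ)) := by
    rw [Finset.sum_image (by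
      intro a _ b _ hab
      have : 2*a+1 = 2*b+1 := hab
      omega)]
    exact Finset.sum_congr rfl fun m _ => by
      rw [show (2*m+1-1)/2 = m from by omega]
  rw [← himg]
  apply Finset.sum_subset
  · intro r hr
    simp only [Finset.mem_filter, Finset.mem_range] at hr
    obtain ⟨m, hm⟩ := hr.2
    simp only [Finset.mem_image, Finset.mem_range]
    exact ⟨m, by omega, by omega⟩
  · intro r hr hnr
    simp only [Finset.mem_image, Finset.mem_range] at hr
    simp only [Finset.mem_filter, Finset.mem_range] at hnr
    obtain ⟨m, _, rfl⟩ := hr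
    have hlt : n < 2*m+1 := by
      by_contra hc
      exact hnr ⟨by omega, odd_two_mul_add_one m⟩
    rw [Nat.choose_eq_zero_of_lt hlt]
    simp

lemma dSU2_eq (n K : ℕ) (h : n+1 ≤ 2*K) :
    ((dSU2 n : ℤ) : ℚ) = ∑ m ∈ range K, Tq n m := by
  simp only [dSU2, Int.cast_sub, Int.cast_sum, apply_ite (fun z : ℤ => (z : ℚ)),
    Int.cast_mul, Int.cast_natCast, Int.cast_zero]
  rw [even_part n K h, odd_part n K h, ← Finset.sum_sub_distrib]
  exact Finset.sum_congr rfl fun m _ => rfl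

theorem dSU2_recursion :
    ∀ n : ℕ, 1 ≤ n →
      ((n : ℤ) + 2) * dSU2 (n + 1) = (n : ℤ) * (2 * dSU2 n + 3 * dSU2 (n - 1)) := by
  intro n hn
  obtain ⟨k, rfl⟩ : ∃ k, n = k+1 := ⟨n-1, by omega⟩
  rw [show k+1-1 = k from rfl, show k+1+1 = k+2 from rfl]
  have e2 : ((dSU2 (k+2) : ℤ) : ℚ) = ∑ m ∈ range (k+3), Tq (k+2) m :=
    dSU2_eq (k+2) (k+3) (by omega)
  have e1 : ((dSU2 (k+1) : ℤ) : ℚ) = ∑ m ∈ range (k+3), Tq (k+1) m :=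
    dSU2_eq (k+1) (k+3) (by omega)
  have e0 : ((dSU2 k : ℤ) : ℚ) = ∑ m ∈ range (k+3), Tq k m :=
    dSU2_eq k (k+3) (by omega)
  have T := tele k
  rw [Finset.sum_sub_distrib, Finset.sum_sub_distrib,
    ← Finset.mul_sum, ← Finset.mul_sum, ← Finset.mul_sum] at T
  have main : ((((k:ℕ)+1:ℕ):ℚ)+2) * ((dSU2 (k+2) : ℤ) : ℚ)
      = (((k:ℕ)+1:ℕ):ℚ) * (2*((dSU2 (k+1) : ℤ):ℚ) + 3*((dSU2 k : ℤ):ℚ)) := by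
    rw [e2, e1, e0]
    push_cast
    linear_combination T
  exact_mod_cast main
end

section
/- Let f(x) = (−1 + 3x + √(1 − 2x − 3x²)) / (2x·√(1 − 2x − 3x²)), defined on a neighborhood of 0 (extended by the value f(0) = 0). Then f satisfies the differential equation (x − 2x² − 3x³)·f'(x) + (1 − 3x²)·f(x) − 1 = 0 for all x in a punctured neighborhood of 0 where 1 − 2x − 3x² > 0 and x ≠ 0. -/
/-!
Away from `0`, `f = (3x - 1 + s) / (2xs)` with `s = √q`, `q = 1 - 2x - 3x²`, and `s' = -(1 + 3x) / s`.
Simplifying the quotient rule with `s² = q` gives `f' = ((1 - 3x)(1 - 3x²) - qs) / (2x²qs)`; in the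
differential equation the terms in `s` then cancel because `1 - 3x² - 2x = q`.
-/

noncomputable def fSU2 : ℝ → ℝ := fun x =>
  if x = 0 then 0
  else (-1 + 3 * x + Real.sqrt (1 - 2 * x - 3 * x ^ 2)) /
    (2 * x * Real.sqrt (1 - 2 * x - 3 * x ^ 2))

open Real

lemma hasDerivAt_sqrt_one_sub_two_mul_sub_three_mul_sq {x : ℝ} (hq : 0 < 1 - 2 * x - 3 * x ^ 2) :
    HasDerivAt (fun y => √(1 - 2 * y - 3 * y ^ 2))
      (-(1 + 3 * x) / √(1 - 2 * x - 3 * x ^ 2)) x := by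
  have hpoly : HasDerivAt (fun y : ℝ => 1 - 2 * y - 3 * y ^ 2) (-2 - 6 * x) x :=
    ((((hasDerivAt_id' x).const_mul 2).const_sub 1).sub
      ((hasDerivAt_pow 2 x).const_mul 3)).congr_deriv (by push_cast; ring)
  refine (hpoly.sqrt hq.ne').congr_deriv ?_
  have : √(1 - 2 * x - 3 * x ^ 2) ≠ 0 := (Real.sqrt_pos.mpr hq).ne'
  field_simp
  ring

lemma fSU2_of_ne_zero {x : ℝ} (hx : x ≠ 0) :
    fSU2 x = (-1 + 3 * x + √(1 - 2 * x - 3 * x ^ 2)) / (2 * x * √(1 - 2 * x - 3 * x ^ 2)) :=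
  if_neg hx

lemma hasDerivAt_fSU2 {x : ℝ} (hx : x ≠ 0) (hq : 0 < 1 - 2 * x - 3 * x ^ 2) :
    HasDerivAt fSU2
      (((1 - 3 * x) * (1 - 3 * x ^ 2) - (1 - 2 * x - 3 * x ^ 2) * √(1 - 2 * x - 3 * x ^ 2)) /
        (2 * x ^ 2 * (1 - 2 * x - 3 * x ^ 2) * √(1 - 2 * x - 3 * x ^ 2))) x := by
  have hs := hasDerivAt_sqrt_one_sub_two_mul_sub_three_mul_sq hq
  have hnum := (((hasDerivAt_id' x).const_mul 3).const_add (-1)).fun_add hs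
  have hden := ((hasDerivAt_id' x).const_mul 2).fun_mul hs
  have hs_pos : 0 < √(1 - 2 * x - 3 * x ^ 2) := Real.sqrt_pos.mpr hq
  have hs_sq : √(1 - 2 * x - 3 * x ^ 2) ^ 2 = 1 - 2 * x - 3 * x ^ 2 := Real.sq_sqrt hq.le
  refine ((hnum.div hden (by positivity)).congr_of_eventuallyEq ?_).congr_deriv ?_
  · filter_upwards [isOpen_ne.mem_nhds hx] with y hy using fSU2_of_ne_zero hy
  · generalize √(1 - 2 * x - 3 * x ^ 2) = s at hs_pos hs_sq ⊢
    generalize hq_def : 1 - 2 * x - 3 * x ^ 2 = q at hq hs_sq ⊢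
    field_simp
    linear_combination (-s ^ 2) * hq_def - (9 * x ^ 3 - x) * hs_sq

theorem fSU2_ode :
    ∀ x : ℝ, x ≠ 0 → 1 - 2 * x - 3 * x ^ 2 > 0 →
      (x - 2 * x ^ 2 - 3 * x ^ 3) * deriv fSU2 x + (1 - 3 * x ^ 2) * fSU2 x - 1 = 0 := by
  intro x hx hq
  have hs_pos : 0 < √(1 - 2 * x - 3 * x ^ 2) := Real.sqrt_pos.mpr hq
  rw [(hasDerivAt_fSU2 hx hq).deriv, fSU2_of_ne_zero hx]
  generalize √(1 - 2 * x - 3 * x ^ 2) = s at hs_pos ⊢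
  generalize hq_def : 1 - 2 * x - 3 * x ^ 2 = q at hq ⊢
  field_simp
  linear_combination (1 - 3 * x) * (1 - 3 * x ^ 2) * hq_def
end

section
/- The constant term of the Laurent polynomial (2 + y₁ + y₁^{−1} + y₂ + y₂^{−1} + y₁y₂ + y₁^{−1}y₂^{−1})^n equals the n-th Franel number Σ_{k=0}^{n} C(n,k)³. -/
/-!
The character factors as `(1 + y₁⁻¹y₂⁻¹)(1 + y₁)(1 + y₂)`, so by the binomial theorem
`chiYⁿ = ∑ C(n,k) C(n,i) C(n,j) y₁^(i-k) y₂^(j-k)`, and the constant term keeps exactly the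
diagonal `i = j = k`.
-/

open AddMonoidAlgebra Finset

/-- The SU(3) adjoint character after the substitution `y₁ = z₁²/z₂`, `y₂ = z₂²/z₁`:
`2 + y₁ + y₁⁻¹ + y₂ + y₂⁻¹ + y₁y₂ + y₁⁻¹y₂⁻¹`. -/
noncomputable def chiY : AddMonoidAlgebra ℤ (ℤ × ℤ) :=
  AddMonoidAlgebra.single (0, 0) 2 + AddMonoidAlgebra.single (1, 0) 1
  + AddMonoidAlgebra.single (-1, 0) 1 + AddMonoidAlgebra.single (0, 1) 1
  + AddMonoidAlgebra.single (0, -1) 1 + AddMonoidAlgebra.single (1, 1) 1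
  + AddMonoidAlgebra.single (-1, -1) 1

theorem AddMonoidAlgebra.one_add_single_pow {R G : Type*} [CommSemiring R] [AddCommMonoid G]
    (g : G) (n : ℕ) :
    (1 + single g 1 : AddMonoidAlgebra R G) ^ n
      = ∑ k ∈ range (n + 1), single (k • g) (n.choose k : R) := by
  rw [add_comm, add_pow]
  refine sum_congr rfl fun k _ => ?_
  rw [one_pow, mul_one, single_pow, one_pow, natCast_def, single_mul_single, one_mul, add_zero]

theorem chiY_eq_mul :
    chiY = (1 + single (-1, -1) 1) * (1 + single (1, 0) 1) * (1 + single (0, 1) 1) := by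
  have two : (single (0, 0) 2 : AddMonoidAlgebra ℤ (ℤ × ℤ)) = 1 + 1 := by
    rw [one_def, ← single_add]; rfl
  rw [chiY, two]
  simp only [add_mul, mul_add, mul_one, one_def, single_mul_single, Prod.mk_add_mk]
  norm_num [Prod.mk_zero_zero]
  abel

theorem nsmul_add_nsmul_add_nsmul_eq_zero_iff (i j k : ℕ) :
    k • ((-1, -1) : ℤ × ℤ) + i • (1, 0) + j • (0, 1) = (0, 0) ↔ i = k ∧ j = k := by
  simp only [Prod.smul_mk, Prod.mk_add_mk, Prod.mk.injEq, nsmul_eq_mul]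
  omega

theorem chiY_pow (n : ℕ) :
    chiY ^ n = ∑ j ∈ range (n + 1), ∑ i ∈ range (n + 1), ∑ k ∈ range (n + 1),
      single (k • (-1, -1) + i • (1, 0) + j • (0, 1))
        ((n.choose k : ℤ) * n.choose i * n.choose j) := by
  rw [chiY_eq_mul, mul_pow, mul_pow, one_add_single_pow, one_add_single_pow, one_add_single_pow]
  simp only [sum_mul, mul_sum, single_mul_single]

theorem constTerm_chiY_eq_franel (n : ℕ) :
    (chiY ^ n).coeff (0, 0) = ∑ k ∈ Finset.range (n + 1), (n.choose k : ℤ) ^ 3 := by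
  rw [chiY_pow]
  simp only [coeff_sum, Finset.sum_apply', coeff_single, Finsupp.single_apply,
    nsmul_add_nsmul_add_nsmul_eq_zero_iff, ite_and, sum_ite_eq, sum_ite_mem, inter_self, ← pow_three']
end

section
/- The Franel numbers F(n) = Σ_{k=0}^{n} C(n,k)³ satisfy the recursion (n+1)²·F(n+1) = (7n² + 7n + 2)·F(n) + 8n²·F(n−1) for all n ≥ 1. -/
/-- The `n`-th Franel number `Σ_{k=0}^n C(n,k)³`. -/
def franel (n : ℕ) : ℤ := ∑ k ∈ Finset.range (n + 1), (n.choose k : ℤ) ^ 3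

/-- Certificate function for creative telescoping. -/
def Gc (n V W : ℤ) : ℤ :=
  -((n+1)^2*W^3 + 3*(2*n^2+3*n+1)*V*W^2 + 3*(5*n^2+4*n+1)*V^2*W + (14*n^2+5*n+1)*V^3)

lemma rel (m k : ℕ) : ((k:ℤ)+1) * (m.choose (k+1) : ℤ) = ((m:ℤ)-k) * (m.choose k : ℤ) := by
  have h := Nat.add_one_mul_choose_eq m k
  have h2 : (m+1).choose (k+1) = m.choose k + m.choose (k+1) := Nat.choose_succ_succ m k
  rw [h2] at h
  have h' : ((m:ℤ)+1) * (m.choose k : ℤ) = ((m.choose k : ℤ) + (m.choose (k+1) : ℤ)) * ((k:ℤ)+1) := by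
    exact_mod_cast congrArg (Nat.cast : ℕ → ℤ) h
  linarith [h']

lemma key_s8 (m u v w : ℤ) (j : ℕ)
    (h1 : ((j:ℤ)+2)*u = (m-(j:ℤ)-1)*v) (h2 : ((j:ℤ)+1)*v = (m-(j:ℤ))*w) :
    (m+2)^2*(u+2*v+w)^3
      = (7*(m+1)^2+7*(m+1)+2)*(u+v)^3 + 8*(m+1)^2*u^3 + (Gc (m+1) u v - Gc (m+1) v w) := by
  have hne : (((j:ℤ)+1)^3*((j:ℤ)+2)^3) ≠ 0 := by positivity
  have h : (((j:ℤ)+1)^3*((j:ℤ)+2)^3) *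
      ((m+2)^2*(u+2*v+w)^3
        - ((7*(m+1)^2+7*(m+1)+2)*(u+v)^3 + 8*(m+1)^2*u^3 + (Gc (m+1) u v - Gc (m+1) v w))) = 0 := by
    simp only [Gc]
    linear_combination (((j:ℤ)+1)^3 * (48*w^2 + 168*v*w + 60*v^2 + 48*u*w + 24*u*v + 48*(j:ℤ)*w^2 + 156*(j:ℤ)*v*w + 54*(j:ℤ)*v^2 + 48*(j:ℤ)*u*w + 24*(j:ℤ)*u*v + 12*(j:ℤ)^2*w^2 + 36*(j:ℤ)^2*v*w + 12*(j:ℤ)^2*v^2 + 12*(j:ℤ)^2*u*w + 6*(j:ℤ)^2*u*v + 48*m*w^2 + 192*m*v*w + 30*m*v^2 + 48*m*u*w + 12*m*u*v + 48*m*(j:ℤ)*w^2 + 168*m*(j:ℤ)*v*w + 21*m*(j:ℤ)*v^2 + 48*m*(j:ℤ)*u*w + 12*m*(j:ℤ)*u*v + 12*m*(j:ℤ)^2*w^2 + 36*m*(j:ℤ)^2*v*w + 3*m*(j:ℤ)^2*v^2 + 12*m*(j:ℤ)^2*u*w + 3*m*(j:ℤ)^2*u*v + 12*m^2*w^2 +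 66*m^2*v*w - 6*m^2*v^2 + 12*m^2*u*w + 12*m^2*(j:ℤ)*w^2 + 51*m^2*(j:ℤ)*v*w - 9*m^2*(j:ℤ)*v^2 + 12*m^2*(j:ℤ)*u*w + 3*m^2*(j:ℤ)^2*w^2 + 9*m^2*(j:ℤ)^2*v*w - 3*m^2*(j:ℤ)^2*v^2 + 3*m^2*(j:ℤ)^2*u*w + 6*m^3*v*w + 3*m^3*(j:ℤ)*v*w)) * h1 + (-24*v*w - 60*v^2 - 96*(j:ℤ)*v*w - 234*(j:ℤ)*v^2 - 150*(j:ℤ)^2*v*w - 354*(j:ℤ)^2*v^2 - 114*(j:ℤ)^3*v*w - 258*(j:ℤ)^3*v^2 - 42*(j:ℤ)^4*v*w - 90*(j:ℤ)^4*v^2 - 6*(j:ℤ)^5*v*w - 12*(j:ℤ)^5*v^2 - 36*m*v*w - 114*m*v^2 - 144*m*(j:ℤ)*v*w - 441*m*(j:ℤ)*v^2 - 225*m*(j:ℤ)^2*v*w - 660*m*(j:ℤ)^2*v^2 - 171*m*(j:ℤ)^3*v*w - 474*m*(j:ℤ)^3*v^2 - 63*m*(j:ℤ)^4*v*w - 162*m*(j:ℤ)^4*v^2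 - 9*m*(j:ℤ)^5*v*w - 21*m*(j:ℤ)^5*v^2 - 12*m^2*v*w - 60*m^2*v^2 - 48*m^2*(j:ℤ)*v*w - 228*m^2*(j:ℤ)*v^2 - 75*m^2*(j:ℤ)^2*v*w - 333*m^2*(j:ℤ)^2*v^2 - 57*m^2*(j:ℤ)^3*v*w - 231*m^2*(j:ℤ)^3*v^2 - 21*m^2*(j:ℤ)^4*v*w - 75*m^2*(j:ℤ)^4*v^2 - 3*m^2*(j:ℤ)^5*v*w - 9*m^2*(j:ℤ)^5*v^2 - 6*m^3*v^2 - 21*m^3*(j:ℤ)*v^2 - 27*m^3*(j:ℤ)^2*v^2 - 15*m^3*(j:ℤ)^3*v^2 - 3*m^3*(j:ℤ)^4*v^2) * h2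
  rcases mul_eq_zero.mp h with h' | h'
  · exact absurd h' hne
  · linarith [sub_eq_zero.mp h']

theorem franel_recursion :
    ∀ n : ℕ, 1 ≤ n →
      ((n : ℤ) + 1) ^ 2 * franel (n + 1)
        = (7 * (n : ℤ) ^ 2 + 7 * n + 2) * franel n + 8 * (n : ℤ) ^ 2 * franel (n - 1) := by
  intro n hn
  obtain ⟨m, rfl⟩ : ∃ m, n = m + 1 := ⟨n - 1, (Nat.succ_pred_eq_of_pos hn).symm⟩
  have H2 : ∀ j : ℕ,
      ((m:ℤ)+2)^2 * ((m+2).choose (j+2) : ℤ)^3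
        - (7*((m:ℤ)+1)^2+7*((m:ℤ)+1)+2) * ((m+1).choose (j+2) : ℤ)^3
        - 8*((m:ℤ)+1)^2 * (m.choose (j+2) : ℤ)^3
      = Gc ((m:ℤ)+1) (m.choose (j+2) : ℤ) (m.choose (j+1) : ℤ)
        - Gc ((m:ℤ)+1) (m.choose (j+1) : ℤ) (m.choose j : ℤ) := by
    intro j
    have h1 := rel m (j+1)
    have h2 := rel m j
    push_cast at h1 h2
    have h1' : ((j:ℤ)+2) * (m.choose (j+2) : ℤ) = ((m:ℤ)-(j:ℤ)-1) * (m.choose (j+1) : ℤ) := by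
      linarith [h1]
    have h2' : ((j:ℤ)+1) * (m.choose (j+1) : ℤ) = ((m:ℤ)-(j:ℤ)) * (m.choose j : ℤ) := by
      linarith [h2]
    have hP1 : ((m+1).choose (j+2) : ℤ) = (m.choose (j+1) : ℤ) + (m.choose (j+2) : ℤ) := by
      exact_mod_cast congrArg (Nat.cast : ℕ → ℤ) (Nat.choose_succ_succ m (j+1))
    have hP2 : ((m+2).choose (j+2) : ℤ)
        = (m.choose j : ℤ) + 2*(m.choose (j+1) : ℤ) + (m.choose (j+2) : ℤ) := by
      have e1 : (m+2).choose (j+2) = (m+1).choose (j+1) + (m+1).choose (j+2) :=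
        Nat.choose_succ_succ (m+1) (j+1)
      have e2 : (m+1).choose (j+1) = m.choose j + m.choose (j+1) := Nat.choose_succ_succ m j
      have e3 : (m+1).choose (j+2) = m.choose (j+1) + m.choose (j+2) := Nat.choose_succ_succ m (j+1)
      rw [e1, e2, e3]; push_cast; ring
    have hk := key_s8 (m:ℤ) (m.choose (j+2) : ℤ) (m.choose (j+1) : ℤ) (m.choose j : ℤ) j h1' h2'
    rw [hP1, hP2]
    linarith [hk]
  -- telescoping
  have Htel : ∑ j ∈ Finset.range (m+1),
      (Gc ((m:ℤ)+1) (m.choose (j+1+1) : ℤ) (m.choose (j+1) : ℤ)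
        - Gc ((m:ℤ)+1) (m.choose (j+1) : ℤ) (m.choose j : ℤ))
      = Gc ((m:ℤ)+1) (m.choose (m+2) : ℤ) (m.choose (m+1) : ℤ)
        - Gc ((m:ℤ)+1) (m.choose 1 : ℤ) (m.choose 0 : ℤ) :=
    Finset.sum_range_sub (fun j => Gc ((m:ℤ)+1) (m.choose (j+1) : ℤ) (m.choose j : ℤ)) (m+1)
  have H : ∑ k ∈ Finset.range (m+3),
      (((m:ℤ)+2)^2 * ((m+2).choose k : ℤ)^3
        - (7*((m:ℤ)+1)^2+7*((m:ℤ)+1)+2) * ((m+1).choose k : ℤ)^3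
        - 8*((m:ℤ)+1)^2 * (m.choose k : ℤ)^3) = 0 := by
    rw [Finset.sum_range_succ', Finset.sum_range_succ']
    have : ∀ j ∈ Finset.range (m+1),
        (((m:ℤ)+2)^2 * ((m+2).choose (j+1+1) : ℤ)^3
          - (7*((m:ℤ)+1)^2+7*((m:ℤ)+1)+2) * ((m+1).choose (j+1+1) : ℤ)^3
          - 8*((m:ℤ)+1)^2 * (m.choose (j+1+1) : ℤ)^3)
        = (Gc ((m:ℤ)+1) (m.choose (j+1+1) : ℤ) (m.choose (j+1) : ℤ)
          - Gc ((m:ℤ)+1) (m.choose (j+1) : ℤ) (m.choose j : ℤ)) := by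
      intro j _; exact H2 j
    rw [Finset.sum_congr rfl this, Htel]
    simp [Nat.choose_one_right, Nat.choose_succ_self,
      Nat.choose_eq_zero_of_lt (by omega : m < m+2), Gc]
    ring
  -- assemble
  have e1 : franel (m+1+1) = ∑ k ∈ Finset.range (m+3), ((m+2).choose k : ℤ)^3 := rfl
  have e2 : (∑ k ∈ Finset.range (m+3), ((m+1).choose k : ℤ)^3) = franel (m+1) := by
    rw [show m+3 = (m+2)+1 from rfl, Finset.sum_range_succ]
    simp [franel, Nat.choose_succ_self]
  have e3 : (∑ k ∈ Finset.range (m+3), ((m).choose k : ℤ)^3) = franel m := by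
    rw [show m+3 = (m+1)+1+1 from rfl, Finset.sum_range_succ, Finset.sum_range_succ]
    simp [franel, Nat.choose_succ_self, Nat.choose_eq_zero_of_lt (by omega : m < m+2)]
  rw [Finset.sum_sub_distrib, Finset.sum_sub_distrib, ← Finset.mul_sum, ← Finset.mul_sum,
    ← Finset.mul_sum] at H
  rw [show m+1-1 = m from rfl]
  rw [e2, e3] at H
  push_cast
  rw [e1]
  linear_combination H
end

section
/- Let F be a formal power series over ℚ satisfying the differential equation X(X+1)(8X−1)·F'' + (24X² + 14X − 1)·F' + 2(4X+1)·F = 0. Then the coefficients a(n) of F satisfy (n+1)²·a(n+1) = (7n² + 7n + 2)·a(n) + 8n²·a(n−1) for all n ≥ 1. -/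
/-!
With `θ = X d⁄dX`, the equation multiplied by `X` reads
`θ²F - X (7θ² + 7θ + 2) F - 8 X² (θ + 1)² F = 0`. Since `θ` multiplies the `n`-th coefficient
by `n` and `X` shifts coefficients by one, the coefficient of `X ^ (n + 1)` of this identity is
the recursion.
-/

open PowerSeries

namespace PowerSeries

variable {R : Type*}

@[simp]
theorem coeff_ofNat_mul [Semiring R] (n k : ℕ) [k.AtLeastTwo] (φ : R⟦X⟧) :
    coeff n ((no_index (OfNat.ofNat k) : R⟦X⟧) * φ) = OfNat.ofNat k * coeff n φ := by
  rw [← map_ofNat C, coeff_C_mul]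

variable [CommRing R]

noncomputable def eulerOp (F : R⟦X⟧) : R⟦X⟧ := X * d⁄dX R F

@[simp]
theorem coeff_eulerOp (F : R⟦X⟧) (n : ℕ) : coeff n (eulerOp F) = n * coeff n F := by
  cases n with
  | zero => simp [eulerOp]
  | succ n =>
    rw [eulerOp, coeff_succ_X_mul, coeff_derivative, mul_comm]
    push_cast
    rfl

theorem eulerOp_eulerOp (F : R⟦X⟧) :
    eulerOp (eulerOp F) = X ^ 2 * d⁄dX R (d⁄dX R F) + X * d⁄dX R F := by
  simp only [eulerOp, Derivation.leibniz, derivative_X, smul_eq_mul]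
  ring

end PowerSeries

theorem franel_ode_eulerOp_form {R : Type*} [CommRing R] (F : R⟦X⟧) :
    X * (X * (X + 1) * (8 * X - 1) * d⁄dX R (d⁄dX R F) + (24 * X ^ 2 + 14 * X - 1) * d⁄dX R F
        + 2 * (4 * X + 1) * F)
      = -(eulerOp (eulerOp F) - X * (7 * eulerOp (eulerOp F) + 7 * eulerOp F + 2 * F)
          - 8 * X ^ 2 * (eulerOp (eulerOp F) + 2 * eulerOp F + F)) := by
  rw [eulerOp_eulerOp, eulerOp]
  ring

theorem franel_ode_coeff_recursion (F : PowerSeries ℚ)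
    (hF : X * (X + 1) * (8 * X - 1) * PowerSeries.derivative ℚ (PowerSeries.derivative ℚ F)
        + (24 * X ^ 2 + 14 * X - 1) * PowerSeries.derivative ℚ F
        + 2 * (4 * X + 1) * F = 0) :
    ∀ n : ℕ, 1 ≤ n →
      ((n : ℚ) + 1) ^ 2 * coeff (n + 1) F
        = (7 * (n : ℚ) ^ 2 + 7 * n + 2) * coeff n F
          + 8 * (n : ℚ) ^ 2 * coeff (n - 1) F := by
  intro n hn
  obtain ⟨m, rfl⟩ := Nat.exists_eq_add_of_le' hn
  have h := congrArg (coeff (m + 1 + 1)) (franel_ode_eulerOp_form F)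
  rw [hF, mul_zero, map_zero] at h
  simp only [map_neg, map_sub, map_add, mul_assoc, coeff_ofNat_mul, coeff_eulerOp,
    coeff_succ_X_mul, sq] at h
  push_cast at h ⊢
  linear_combination h
end
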